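/- Let (A, m, Δ) be an infinitesimal bialgebra of weight λ, and define a ⊳ b := Σ_{(b)} b_(1) a b_(2) (the image of Δ(b) under the linear map sending x ⊗ y to x a y). Then (A, ⊳) is a left pre-Lie algebra: ⊳ is k-bilinear and (a ⊳ b) ⊳ c − a ⊳ (b ⊳ c) = (b ⊳ a) ⊳ c − b ⊳ (a ⊳ c) for all a, b, c ∈ A. -/

import Mathlib

open TensorProduct

/-!
Write `a ⊳ b = Σ b₁ a b₂`. Applying the compatibility rule twice to `b ⊳ c = Σ c₁ b c₂` gives
`a ⊳ (b ⊳ c) = (a ⊳ b) ⊳ c + Σ c₁ b (a ⊳ c₂) + Σ (a ⊳ c₁) b c₂ + λ (ab + ba) ⊳ c`,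
and by coassociativity the two middle sums are `Σ c₁ b c₂ a c₃` and `Σ c₁ a c₂ b c₃`.
Hence `a ⊳ (b ⊳ c) - (a ⊳ b) ⊳ c` is symmetric in `a` and `b`.
-/

/-- The linear map `A ⊗ A → A` sending `x ⊗ y` to `x * a * y`. -/
noncomputable def sandwich (k : Type*) {A : Type*} [CommRing k] [NonUnitalRing A]
    [Module k A] [SMulCommClass k A A] [IsScalarTower k A A] (a : A) :
    A ⊗[k] A →ₗ[k] A :=
  (LinearMap.mul' k A).comp (LinearMap.rTensor A (LinearMap.mulRight k a))

section Sandwich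

variable {k A : Type*} [CommRing k] [NonUnitalRing A] [Module k A]
  [SMulCommClass k A A] [IsScalarTower k A A]

@[simp]
lemma sandwich_tmul (a x y : A) : sandwich k a (x ⊗ₜ[k] y) = x * a * y := by
  simp [sandwich]

lemma sandwich_add (a a' : A) : sandwich k (a + a') = sandwich k a + sandwich k a' := by
  ext x y
  simp [mul_add, add_mul]

lemma sandwich_smul (r : k) (a : A) : sandwich k (r • a) = r • sandwich k a := by
  ext x y
  simp [mul_smul_comm, smul_mul_assoc]

lemma sandwich_rTensor_mulLeft (a u : A) (t : A ⊗[k] A) :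
    sandwich k a (LinearMap.rTensor A (LinearMap.mulLeft k u) t) = u * sandwich k a t := by
  induction t using TensorProduct.induction_on with
  | zero => simp
  | tmul x y => simp [mul_assoc]
  | add s t hs ht => simp only [map_add, hs, ht, mul_add]

lemma sandwich_lTensor_mulRight (a v : A) (t : A ⊗[k] A) :
    sandwich k a (LinearMap.lTensor A (LinearMap.mulRight k v) t) = sandwich k a t * v := by
  induction t using TensorProduct.induction_on with
  | zero => simp
  | tmul x y => simp [mul_assoc]
  | add s t hs ht => simp only [map_add, hs, ht, add_mul]

/-- Both sides send `u ⊗ v ⊗ w` to `u * b * v * a * w`. -/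
lemma sandwich_comp_lTensor_sandwich (a b : A) :
    sandwich k b ∘ₗ LinearMap.lTensor A (sandwich k a) =
      sandwich k a ∘ₗ LinearMap.rTensor A (sandwich k b) ∘ₗ
        (TensorProduct.assoc k A A A).symm.toLinearMap := by
  ext u v w
  simp [mul_assoc]

variable {lam : k} {Δ : A →ₗ[k] A ⊗[k] A}

section Compat

variable (hcompat : ∀ a b : A,
  Δ (a * b) =
    LinearMap.rTensor A (LinearMap.mulLeft k a) (Δ b) +
    LinearMap.lTensor A (LinearMap.mulRight k b) (Δ a) +
    lam • (a ⊗ₜ[k] b))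
include hcompat

lemma sandwich_map_mul (a u v : A) :
    sandwich k a (Δ (u * v)) =
      u * sandwich k a (Δ v) + sandwich k a (Δ u) * v + lam • (u * a * v) := by
  rw [hcompat, map_add, map_add, sandwich_rTensor_mulLeft, sandwich_lTensor_mulRight,
    map_smul, sandwich_tmul]

lemma sandwich_map_sandwich (a b : A) (t : A ⊗[k] A) :
    sandwich k a (Δ (sandwich k b t)) =
      sandwich k b (LinearMap.lTensor A (sandwich k a ∘ₗ Δ) t) +
      sandwich k b (LinearMap.rTensor A (sandwich k a ∘ₗ Δ) t) +
      sandwich k (sandwich k a (Δ b)) t + lam • sandwich k (a * b + b * a) t := by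
  induction t using TensorProduct.induction_on with
  | zero => simp
  | tmul x y =>
    simp only [sandwich_tmul, LinearMap.lTensor_tmul, LinearMap.rTensor_tmul,
      LinearMap.comp_apply, sandwich_map_mul hcompat, mul_add, add_mul, smul_add,
      mul_smul_comm, mul_assoc]
    abel
  | add s t hs ht =>
    simp only [map_add, hs, ht, smul_add]
    abel

end Compat

/-- By coassociativity both sides equal `Σ c₁ * b * c₂ * a * c₃`. -/
lemma sandwich_lTensor_eq_sandwich_rTensor
    (hcoassoc : ∀ a : A,
      (TensorProduct.assoc k A A A) (LinearMap.rTensor A Δ (Δ a)) =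
        LinearMap.lTensor A Δ (Δ a)) (a b c : A) :
    sandwich k b (LinearMap.lTensor A (sandwich k a ∘ₗ Δ) (Δ c)) =
      sandwich k a (LinearMap.rTensor A (sandwich k b ∘ₗ Δ) (Δ c)) := by
  rw [LinearMap.lTensor_comp_apply, ← LinearMap.comp_apply (sandwich k b),
    sandwich_comp_lTensor_sandwich, ← hcoassoc]
  simp [LinearMap.rTensor_comp_apply]

end Sandwich

/-- In an infinitesimal bialgebra of weight `λ`, the operation
`a ⊳ b := Σ b₁ a b₂` is `k`-bilinear and makes `A` a left pre-Lie algebra. -/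
theorem infinitesimal_bialgebra_gives_pre_lie
    {k A : Type*} [CommRing k] [NonUnitalRing A] [Module k A]
    [SMulCommClass k A A] [IsScalarTower k A A] (lam : k)
    (Δ : A →ₗ[k] A ⊗[k] A)
    (hcoassoc : ∀ a : A,
      (TensorProduct.assoc k A A A) (LinearMap.rTensor A Δ (Δ a)) =
        LinearMap.lTensor A Δ (Δ a))
    (hcompat : ∀ a b : A,
      Δ (a * b) =
        LinearMap.rTensor A (LinearMap.mulLeft k a) (Δ b) +
        LinearMap.lTensor A (LinearMap.mulRight k b) (Δ a) +
        lam • (a ⊗ₜ[k] b)) :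
    (∀ a a' b : A,
      sandwich k (a + a') (Δ b) = sandwich k a (Δ b) + sandwich k a' (Δ b)) ∧
    (∀ (r : k) (a b : A),
      sandwich k (r • a) (Δ b) = r • sandwich k a (Δ b)) ∧
    (∀ a b b' : A,
      sandwich k a (Δ (b + b')) = sandwich k a (Δ b) + sandwich k a (Δ b')) ∧
    (∀ (r : k) (a b : A),
      sandwich k a (Δ (r • b)) = r • sandwich k a (Δ b)) ∧
    (∀ a b c : A,
      sandwich k (sandwich k a (Δ b)) (Δ c) - sandwich k a (Δ (sandwich k b (Δ c))) =
        sandwich k (sandwich k b (Δ a)) (Δ c) - sandwich k b (Δ (sandwich k a (Δ c)))) := by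
  refine ⟨fun a a' b => by rw [sandwich_add]; rfl, fun r a b => by rw [sandwich_smul]; rfl,
    fun a b b' => by simp, fun r a b => by simp, fun a b c => ?_⟩
  rw [sandwich_map_sandwich hcompat a b, sandwich_map_sandwich hcompat b a,
    sandwich_lTensor_eq_sandwich_rTensor hcoassoc a b,
    sandwich_lTensor_eq_sandwich_rTensor hcoassoc b a, add_comm (b * a)]
  abel
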